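/- With N ≥ 1 units, binary treatments A_i ∈ {0,1}, outcomes Y_i ∈ ℝ, covariates X_i ∈ 𝒳, M ≥ 1 matches per unit drawn from the opposite treatment group, K_M(i) the number of times unit i is used as a match, and ANY two functions μ̂₀, μ̂₁ : 𝒳 → ℝ, the bias-corrected matching estimator equals the average of regression-adjusted imputed contrasts: τ̂_mat − B̂_M = (1/N)·Σ_{i=1}^N (Ỹ_i(1) − Ỹ_i(0)), where τ̂_mat = (1/N)·Σ_i (2A_i − 1)·(1 + K_M(i)/M)·Y_i, B̂_M = (1/N)·Σ_i (2A_i − 1)·(1/M)·Σ_{j ∈ 𝒥_M(i)} (μ̂_{1−A_i}(X_i) − μ̂_{1−A_i}(X_j)), and the regression-adjusted imputations are Ỹ_i(A_i) = Y_i and Ỹ_i(1−A_i) = (1/M)·Σ_{j ∈ 𝒥_M(i)} ( Y_j + μ̂_{1−A_i}(X_i) − μ̂_{1−A_i}(X_j) ). -/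

import Mathlib

/-!
Unit `i` enters `τ̂_mat` with its own outcome and, through `K_M(i)`, as the match of every unit
`l` with `i ∈ 𝒥_M(l)`. Since matches come from the opposite group, the sign `2Aᵢ - 1` of a
match is minus that of the unit it is matched to, so after double counting the `K_M` terms
cancel exactly against the matched-outcome averages of the imputations. The regression terms of
`B̂_M` are literally those of the imputations, so they cancel whatever `μ̂₀, μ̂₁` are.
-/

open Finset

theorem sum_mul_card_filter_mem_eq_sum_sum {ι κ R : Type*} [Fintype κ] [DecidableEq ι]
    [CommSemiring R] (s : Finset ι) (J : κ → Finset ι) (g : ι → R)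
    (hJ : ∀ l, J l ⊆ s) :
    ∑ i ∈ s, g i * #{l | i ∈ J l} = ∑ l, ∑ i ∈ J l, g i := by
  rw [sum_comm' (t' := s) (s' := fun i => {l | i ∈ J l})]
  · simp [mul_comm]
  · intro l i
    simpa using fun hi => hJ l hi

theorem sum_sign_mul_card_filter_mem_add_sum_eq_zero {ι R : Type*} [Fintype ι] [DecidableEq ι]
    [CommRing R] (σ Y : ι → R) (J : ι → Finset ι) (hσ : ∀ l, ∀ j ∈ J l, σ j = -σ l) :
    ∑ i, σ i * (#{l | i ∈ J l} * Y i + ∑ j ∈ J i, Y j) = 0 := by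
  have hcount : ∑ i, σ i * Y i * #{l | i ∈ J l} = -∑ l, σ l * ∑ j ∈ J l, Y j := by
    rw [sum_mul_card_filter_mem_eq_sum_sum univ J _ fun _ => subset_univ _, ← sum_neg_distrib]
    refine sum_congr rfl fun l _ => ?_
    rw [mul_sum, ← sum_neg_distrib]
    exact sum_congr rfl fun j hj => by rw [hσ l j hj]; ring
  calc ∑ i, σ i * (#{l | i ∈ J l} * Y i + ∑ j ∈ J i, Y j)
      = ∑ i, σ i * Y i * #{l | i ∈ J l} + ∑ l, σ l * ∑ j ∈ J l, Y j := by
        rw [← sum_add_distrib]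
        exact sum_congr rfl fun i _ => by ring
    _ = 0 := by rw [hcount, neg_add_cancel]

theorem two_mul_cast_sub_one_of_eq_one_sub {a b : ℕ} (ha : a = 0 ∨ a = 1) (hb : b = 1 - a) :
    2 * (b : ℝ) - 1 = -(2 * (a : ℝ) - 1) := by
  rcases ha with rfl | rfl <;> subst hb <;> norm_num

theorem matching_term_sub_imputed_contrast {ι : Type*} {a : ℕ} (ha : a = 0 ∨ a = 1)
    (y k m c₀ c₁ : ℝ) (s : Finset ι) (Y f₀ f₁ : ι → ℝ) :
    (2 * (a : ℝ) - 1) * (1 + k / m) * y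
        - (2 * (a : ℝ) - 1) *
          ((1 / m) * ∑ j ∈ s, ((if a = 1 then c₀ else c₁) - (if a = 1 then f₀ j else f₁ j)))
      - ((if a = 1 then y else (1 / m) * ∑ j ∈ s, (Y j + c₁ - f₁ j))
          - (if a = 1 then (1 / m) * ∑ j ∈ s, (Y j + c₀ - f₀ j) else y))
      = 1 / m * ((2 * (a : ℝ) - 1) * (k * y + ∑ j ∈ s, Y j)) := by
  rcases ha with rfl | rfl <;>
    simp only [sum_add_distrib, sum_sub_distrib, sum_const, nsmul_eq_mul] <;> norm_num <;> ring

theorem bias_corrected_matching_estimator_regression_adjusted_form_general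
    {𝒳 : Type*}
    (N M : ℕ)
    (A : Fin N → ℕ) (hA : ∀ i, A i = 0 ∨ A i = 1)
    (Y : Fin N → ℝ) (X : Fin N → 𝒳)
    (J : Fin N → Finset (Fin N))
    (hJopp : ∀ i, ∀ j ∈ J i, A j = 1 - A i)
    (μhat₀ μhat₁ : 𝒳 → ℝ) :
    (1 / (N : ℝ)) *
        ∑ i, (2 * (A i : ℝ) - 1) *
          (1 + ((Finset.univ.filter fun l => i ∈ J l).card : ℝ) / (M : ℝ)) * Y i
      - (1 / (N : ℝ)) *
          ∑ i, (2 * (A i : ℝ) - 1) *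
            ((1 / (M : ℝ)) *
              ∑ j ∈ J i,
                ((if A i = 1 then μhat₀ (X i) else μhat₁ (X i))
                  - (if A i = 1 then μhat₀ (X j) else μhat₁ (X j))))
      = (1 / (N : ℝ)) *
          ∑ i,
            ((if A i = 1 then Y i
              else (1 / (M : ℝ)) *
                ∑ j ∈ J i, (Y j + μhat₁ (X i) - μhat₁ (X j)))
            - (if A i = 1 then
                (1 / (M : ℝ)) *
                  ∑ j ∈ J i, (Y j + μhat₀ (X i) - μhat₀ (X j))
              else Y i)) := by
  have hsign : ∀ l, ∀ j ∈ J l, 2 * (A j : ℝ) - 1 = -(2 * (A l : ℝ) - 1) :=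
    fun l j hj => two_mul_cast_sub_one_of_eq_one_sub (hA l) (hJopp l j hj)
  rw [← sub_eq_zero, ← mul_sub, ← mul_sub, ← sum_sub_distrib, ← sum_sub_distrib,
    sum_congr rfl fun i _ => matching_term_sub_imputed_contrast (hA i) _ _ _ _ _ _ _
      (fun j => μhat₀ (X j)) (fun j => μhat₁ (X j)),
    ← mul_sum, sum_sign_mul_card_filter_mem_add_sum_eq_zero _ _ _ hsign, mul_zero, mul_zero]

/-- The bias-corrected matching estimator `τ̂_mat − B̂_M` equals the average of
regression-adjusted imputed contrasts `Ỹᵢ(1) − Ỹᵢ(0)`, where `Ỹᵢ(Aᵢ) = Yᵢ` and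
`Ỹᵢ(1−Aᵢ) = (1/M)·Σ_{j ∈ 𝒥_M(i)} (Yⱼ + μ̂_{1−Aᵢ}(Xᵢ) − μ̂_{1−Aᵢ}(Xⱼ))`. -/
theorem bias_corrected_matching_estimator_regression_adjusted_form
    {𝒳 : Type*}
    (N M : ℕ) (hN : 1 ≤ N) (hM : 1 ≤ M)
    (A : Fin N → ℕ) (hA : ∀ i, A i = 0 ∨ A i = 1)
    (Y : Fin N → ℝ) (X : Fin N → 𝒳)
    (J : Fin N → Finset (Fin N))
    (hJcard : ∀ i, (J i).card = M)
    (hJopp : ∀ i, ∀ j ∈ J i, A j = 1 - A i)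
    (μhat₀ μhat₁ : 𝒳 → ℝ) :
    (1 / (N : ℝ)) *
        ∑ i, (2 * (A i : ℝ) - 1) *
          (1 + ((Finset.univ.filter fun l => i ∈ J l).card : ℝ) / (M : ℝ)) * Y i
      - (1 / (N : ℝ)) *
          ∑ i, (2 * (A i : ℝ) - 1) *
            ((1 / (M : ℝ)) *
              ∑ j ∈ J i,
                ((if A i = 1 then μhat₀ (X i) else μhat₁ (X i))
                  - (if A i = 1 then μhat₀ (X j) else μhat₁ (X j))))
      = (1 / (N : ℝ)) *
          ∑ i,
            ((if A i = 1 then Y i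
              else (1 / (M : ℝ)) *
                ∑ j ∈ J i, (Y j + μhat₁ (X i) - μhat₁ (X j)))
            - (if A i = 1 then
                (1 / (M : ℝ)) *
                  ∑ j ∈ J i, (Y j + μhat₀ (X i) - μhat₀ (X j))
              else Y i)) :=
  bias_corrected_matching_estimator_regression_adjusted_form_general N M A hA Y X J hJopp μhat₀
    μhat₁
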